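/- There exists a constant C > 0 such that for all ξ₁, ξ₁', ξ₂, τ ∈ ℝ, writing ξ = (ξ₁, ξ₂) ∈ ℝ², and for each choice of signs ±, one has ⟨ξ⟩² ≤ C (⟨τ ± |ξ|⟩ + ⟨τ ± |(ξ₁ - ξ₁', ξ₂)|²⟩ + ⟨ξ₁'⟩²). -/
import Mathlib


/-- Japanese bracket of a real number: `⟨a⟩ = (1 + a²)^{1/2}`. -/
noncomputable def jb (a : ℝ) : ℝ := Real.sqrt (1 + a ^ 2)

/-- Euclidean norm of `(a, b) ∈ ℝ²`. -/
noncomputable def nrm (a b : ℝ) : ℝ := Real.sqrt (a ^ 2 + b ^ 2)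

/-- Japanese bracket of `(a, b) ∈ ℝ²`: `⟨(a,b)⟩ = (1 + a² + b²)^{1/2}`. -/
noncomputable def jb2 (a b : ℝ) : ℝ := Real.sqrt (1 + a ^ 2 + b ^ 2)

lemma jb_sq (a : ℝ) : jb a ^ 2 = 1 + a ^ 2 := by
  unfold jb
  rw [Real.sq_sqrt] <;> positivity

lemma jb_ge_one (a : ℝ) : 1 ≤ jb a := by
  unfold jb
  nlinarith [Real.sq_sqrt (show (0:ℝ) ≤ 1 + a ^ 2 by positivity),
    Real.sqrt_nonneg (1 + a ^ 2), sq_nonneg a]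

lemma jb_ge_abs (a : ℝ) : |a| ≤ jb a := by
  unfold jb
  rw [show |a| = Real.sqrt (a ^ 2) by rw [Real.sqrt_sq_eq_abs]]
  apply Real.sqrt_le_sqrt; linarith

lemma nrm_nonneg (a b : ℝ) : 0 ≤ nrm a b := Real.sqrt_nonneg _

lemma nrm_sq (a b : ℝ) : nrm a b ^ 2 = a ^ 2 + b ^ 2 := by
  unfold nrm
  rw [Real.sq_sqrt] <;> positivity

lemma jb2_sq (a b : ℝ) : jb2 a b ^ 2 = 1 + a ^ 2 + b ^ 2 := by
  unfold jb2
  rw [Real.sq_sqrt]; nlinarith [sq_nonneg a, sq_nonneg b]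

/-- Symbol inequality: there is `C > 0` such that for all `ξ₁, ξ₁', ξ₂, τ` and each
choice of signs `ε₁, ε₂ = ±1`,
`⟨ξ⟩² ≤ C(⟨τ ± |ξ|⟩ + ⟨τ ± |(ξ₁ - ξ₁', ξ₂)|²⟩ + ⟨ξ₁'⟩²)` with `ξ = (ξ₁, ξ₂)`. -/
theorem symbol_inequality_two :
    ∃ C : ℝ, 0 < C ∧ ∀ ξ₁ ξ₁' ξ₂ τ ε₁ ε₂ : ℝ, (ε₁ = 1 ∨ ε₁ = -1) → (ε₂ = 1 ∨ ε₂ = -1) →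
      (jb2 ξ₁ ξ₂) ^ 2
        ≤ C * (jb (τ + ε₁ * nrm ξ₁ ξ₂) + jb (τ + ε₂ * (nrm (ξ₁ - ξ₁') ξ₂) ^ 2)
            + (jb ξ₁') ^ 2) := by
  refine ⟨8, by norm_num, fun ξ₁ ξ₁' ξ₂ τ ε₁ ε₂ h₁ h₂ => ?_⟩
  set n := nrm ξ₁ ξ₂ with hn
  set m := nrm (ξ₁ - ξ₁') ξ₂ with hm
  have hn0 : 0 ≤ n := nrm_nonneg _ _
  have hnsq : n ^ 2 = ξ₁ ^ 2 + ξ₂ ^ 2 := nrm_sq _ _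
  have hmsq : m ^ 2 = (ξ₁ - ξ₁') ^ 2 + ξ₂ ^ 2 := nrm_sq _ _
  have hA : |τ + ε₁ * n| ≤ jb (τ + ε₁ * n) := jb_ge_abs _
  have hB : |τ + ε₂ * m ^ 2| ≤ jb (τ + ε₂ * m ^ 2) := jb_ge_abs _
  have hA1 : 1 ≤ jb (τ + ε₁ * n) := jb_ge_one _
  have hB1 : 1 ≤ jb (τ + ε₂ * m ^ 2) := jb_ge_one _
  have hA' : -(ε₂ * (τ + ε₁ * n)) ≤ |τ + ε₁ * n| := by
    rcases h₂ with h | h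
    · simpa [h] using neg_le_abs (τ + ε₁ * n)
    · simpa [h] using le_abs_self (τ + ε₁ * n)
  have hB' : ε₂ * (τ + ε₂ * m ^ 2) ≤ |τ + ε₂ * m ^ 2| := by
    rcases h₂ with h | h
    · simpa [h] using le_abs_self (τ + m ^ 2)
    · subst h; linarith [neg_le_abs (τ + (-1:ℝ) * m ^ 2)]
  have hS : m ^ 2 - n ≤ jb (τ + ε₁ * n) + jb (τ + ε₂ * m ^ 2) := by
    have he2 : ε₂ ^ 2 = 1 := by rcases h₂ with h | h <;> simp [h]
    have he12 : ε₂ * ε₁ ≤ 1 := by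
      rcases h₁ with h | h <;> rcases h₂ with h' | h' <;> norm_num [h, h']
    nlinarith [hA'.trans hA, hB'.trans hB, hn0]
  have hJ : jb ξ₁' ^ 2 = 1 + ξ₁' ^ 2 := jb_sq _
  have hL : jb2 ξ₁ ξ₂ ^ 2 = 1 + ξ₁ ^ 2 + ξ₂ ^ 2 := jb2_sq _ _
  nlinarith [sq_nonneg (n - 2), sq_nonneg (ξ₁ - 2 * ξ₁'), hS, hA1, hB1, sq_nonneg ξ₁']
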